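/- arXiv:2006.10605 — 2 statements merged into one kernel-verified Lean document; each statement's English description precedes it below -/
import Mathlib

section
/- Let n ≥ 1, let w : U → ℝ be a smooth strictly positive function on an open set U ⊆ ℝⁿ (the Riemannian volume density √|G|), let f : U × ℝ → ℝⁿ be continuously differentiable, and let p : U × ℝ → ℝ be a continuously differentiable strictly positive function satisfying the weighted continuity equation ∂/∂t [ p(z,t) w(z) ] = − div_z ( p(z,t) w(z) f(z,t) ) for all z ∈ U, t ∈ ℝ. If z : I → U is differentiable with z'(t) = f(z(t), t), then d/dt [ log p(z(t), t) ] = − (1 / w(z(t))) · div_z ( w(·) f(·, t) )(z(t)). (Proposition 2 in local coordinates: the instantaneous change of log-density equals minus the Riemannian divergence |G|^{−1/2} tr( ∂(√|G| f)/∂z ).) -/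
open Set

lemma euc_sum_apply {n : ℕ} (c : Fin n → EuclideanSpace ℝ (Fin n)) (j : Fin n) :
    (∑ i, c i) j = ∑ i, c i j := by
  have := map_sum (EuclideanSpace.proj (𝕜 := ℝ) j) c Finset.univ
  simp only [PiLp.proj_apply] at this
  exact this

lemma euc_decomp {n : ℕ} (v : EuclideanSpace ℝ (Fin n)) :
    v = ∑ i, v i • EuclideanSpace.single i (1:ℝ) := by
  ext j
  rw [euc_sum_apply]
  simp [EuclideanSpace.single_apply]

lemma clm_decomp {n : ℕ} (L : EuclideanSpace ℝ (Fin n) →L[ℝ] ℝ)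
    (v : EuclideanSpace ℝ (Fin n)) :
    L v = ∑ i, v i * L (EuclideanSpace.single i (1:ℝ)) := by
  conv_lhs => rw [euc_decomp v]
  rw [map_sum]
  simp [map_smul]


/-- The divergence with respect to local coordinates,
`div g (z) = Σᵢ ∂gᵢ/∂zᵢ (z)` (trace of the Jacobian of `g` at `z`). -/
noncomputable def eucDiv {n : ℕ}
    (g : EuclideanSpace ℝ (Fin n) → EuclideanSpace ℝ (Fin n))
    (z : EuclideanSpace ℝ (Fin n)) : ℝ :=
  ∑ i : Fin n, fderiv ℝ g z (EuclideanSpace.single i (1 : ℝ)) i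

set_option maxHeartbeats 1000000 in
/-- Proposition 2 in local coordinates: if `w = √|det G|` is the (smooth,
strictly positive) Riemannian volume density on an open coordinate chart `U`,
and the Lebesgue density `p·w` of the C¹, strictly positive density `p`
satisfies the continuity equation `∂(pw)/∂t = − div_z (p w f)`, then along any
trajectory `z(·)` of `f` one has
`d/dt log p(z(t), t) = − (1/w(z(t))) · div_z (w f(·,t)) (z(t))`,
i.e. the instantaneous change in log-density equals minus the Riemannian
divergence `|G|^{−1/2} tr( ∂(√|G| f)/∂z )`. -/
theorem stmt_5 (n : ℕ) (hn : 1 ≤ n)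
    (U : Set (EuclideanSpace ℝ (Fin n))) (hU : IsOpen U)
    (w : EuclideanSpace ℝ (Fin n) → ℝ)
    (hw : ContDiffOn ℝ (⊤ : ℕ∞) w U)
    (hwpos : ∀ z ∈ U, 0 < w z)
    (f : EuclideanSpace ℝ (Fin n) → ℝ → EuclideanSpace ℝ (Fin n))
    (hf : ContDiffOn ℝ 1 (fun q : EuclideanSpace ℝ (Fin n) × ℝ => f q.1 q.2)
      (U ×ˢ (univ : Set ℝ)))
    (p : EuclideanSpace ℝ (Fin n) → ℝ → ℝ)
    (hp : ContDiffOn ℝ 1 (fun q : EuclideanSpace ℝ (Fin n) × ℝ => p q.1 q.2)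
      (U ×ˢ (univ : Set ℝ)))
    (hppos : ∀ z ∈ U, ∀ t : ℝ, 0 < p z t)
    (hcontinuity : ∀ z ∈ U, ∀ t : ℝ,
      deriv (fun s => p z s * w z) t
        = - eucDiv (fun y => (p y t * w y) • f y t) z)
    (I : Set ℝ) (z : ℝ → EuclideanSpace ℝ (Fin n))
    (hzU : ∀ t ∈ I, z t ∈ U)
    (hz : ∀ t ∈ I, HasDerivAt z (f (z t) t) t) :
    ∀ t ∈ I,
      HasDerivAt (fun s => Real.log (p (z s) s))
        (- (1 / w (z t)) * eucDiv (fun y => w y • f y t) (z t)) t := by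
  intro t ht
  have hzmem : z t ∈ U := hzU t ht
  have hq : ((z t), t) ∈ U ×ˢ (univ : Set ℝ) := ⟨hzmem, mem_univ t⟩
  have hopen : IsOpen (U ×ˢ (univ : Set ℝ)) := hU.prod isOpen_univ
  have hpd : DifferentiableAt ℝ (fun q : EuclideanSpace ℝ (Fin n) × ℝ => p q.1 q.2) ((z t), t) :=
    (hp.contDiffAt (hopen.mem_nhds hq)).differentiableAt one_ne_zero
  have hfd : DifferentiableAt ℝ (fun q : EuclideanSpace ℝ (Fin n) × ℝ => f q.1 q.2) ((z t), t) :=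
    (hf.contDiffAt (hopen.mem_nhds hq)).differentiableAt one_ne_zero
  have hwd : DifferentiableAt ℝ w (z t) :=
    ((hw.contDiffAt (hU.mem_nhds hzmem)).differentiableAt (by simp))
  set Dp := fderiv ℝ (fun q : EuclideanSpace ℝ (Fin n) × ℝ => p q.1 q.2) ((z t), t) with hDp
  set DF := fderiv ℝ (fun q : EuclideanSpace ℝ (Fin n) × ℝ => f q.1 q.2) ((z t), t) with hDF
  set Dw := fderiv ℝ w (z t) with hDw
  set a := p (z t) t with ha
  set c := w (z t) with hc
  set v := f (z t) t with hv
  have hapos : (0:ℝ) < a := hppos (z t) hzmem t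
  have hcpos : (0:ℝ) < c := hwpos (z t) hzmem
  set e : Fin n → EuclideanSpace ℝ (Fin n) := fun i => EuclideanSpace.single i (1:ℝ) with he
  set L : EuclideanSpace ℝ (Fin n) →L[ℝ]
      (EuclideanSpace ℝ (Fin n) × ℝ) :=
    (ContinuousLinearMap.id ℝ (EuclideanSpace ℝ (Fin n))).prod 0 with hL
  have hiy : HasFDerivAt (fun y : EuclideanSpace ℝ (Fin n) => (y, t)) L (z t) :=
    HasFDerivAt.prodMk (hasFDerivAt_id (z t)) (hasFDerivAt_const t (z t))
  have hpy : HasFDerivAt (fun y => p y t) (Dp.comp L) (z t) := by have := HasFDerivAt.comp (z t) hpd.hasFDerivAt hiy; exact this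
  have hfy : HasFDerivAt (fun y => f y t) (DF.comp L) (z t) := by have := HasFDerivAt.comp (z t) hfd.hasFDerivAt hiy; exact this
  have hLe : ∀ i, L (e i) = (e i, (0:ℝ)) := by
    intro i; simp [hL]
  -- abbreviations for the three sums
  set s1 := ∑ i, Dp (e i, (0:ℝ)) * v i with hs1
  set s2 := ∑ i, Dw (e i) * v i with hs2
  set s3 := ∑ i, DF (e i, (0:ℝ)) i with hs3
  -- divergence of (p w f)
  have hprod : HasFDerivAt (fun y => p y t * w y) (a • Dw + c • (Dp.comp L)) (z t) :=
    hpy.mul hwd.hasFDerivAt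
  have hG : HasFDerivAt (fun y => (p y t * w y) • f y t)
      ((a * c) • (DF.comp L) + (a • Dw + c • (Dp.comp L)).smulRight v) (z t) :=
    hprod.smul hfy
  have hGdiv : eucDiv (fun y => (p y t * w y) • f y t) (z t) = c * s1 + a * s2 + a * c * s3 := by
    have hterm : ∀ i : Fin n,
        fderiv ℝ (fun y => (p y t * w y) • f y t) (z t) (e i) i
          = c * (Dp (e i, (0:ℝ)) * v i) + a * (Dw (e i) * v i) + (a * c) * DF (e i, (0:ℝ)) i := by
      intro i
      rw [hG.fderiv]
      simp only [ContinuousLinearMap.add_apply, ContinuousLinearMap.smul_apply,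
        ContinuousLinearMap.smulRight_apply, ContinuousLinearMap.comp_apply, hLe,
        PiLp.add_apply, PiLp.smul_apply, smul_eq_mul]
      ring
    rw [eucDiv, Finset.sum_congr rfl (fun i _ => hterm i), Finset.sum_add_distrib,
      Finset.sum_add_distrib, ← Finset.mul_sum, ← Finset.mul_sum, ← Finset.mul_sum]
  -- divergence of (w f)
  have hW : HasFDerivAt (fun y => w y • f y t) (c • (DF.comp L) + Dw.smulRight v) (z t) :=
    hwd.hasFDerivAt.smul hfy
  have hWdiv : eucDiv (fun y => w y • f y t) (z t) = s2 + c * s3 := by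
    have hterm : ∀ i : Fin n,
        fderiv ℝ (fun y => w y • f y t) (z t) (e i) i
          = Dw (e i) * v i + c * DF (e i, (0:ℝ)) i := by
      intro i
      rw [hW.fderiv]
      simp only [ContinuousLinearMap.add_apply, ContinuousLinearMap.smul_apply,
        ContinuousLinearMap.smulRight_apply, ContinuousLinearMap.comp_apply, hLe,
        PiLp.add_apply, PiLp.smul_apply, smul_eq_mul]
      ring
    rw [eucDiv, Finset.sum_congr rfl (fun i _ => hterm i), Finset.sum_add_distrib,
      ← Finset.mul_sum]
  -- continuity equation in coordinates
  have htime : HasDerivAt (fun s => p (z t) s) (Dp ((0:EuclideanSpace ℝ (Fin n)), (1:ℝ))) t := by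
    have hcurve : HasDerivAt (fun s : ℝ => (((z t) : EuclideanSpace ℝ (Fin n)), s))
        ((0:EuclideanSpace ℝ (Fin n)), (1:ℝ)) t :=
      HasDerivAt.prodMk (hasDerivAt_const t (z t)) (hasDerivAt_id t)
    exact hpd.hasFDerivAt.comp_hasDerivAt (f := fun s : ℝ => ((z t : EuclideanSpace ℝ (Fin n)), s)) t hcurve
  have hkey : Dp ((0:EuclideanSpace ℝ (Fin n)), (1:ℝ)) * c
      = -(c * s1 + a * s2 + a * c * s3) := by
    have h1 := hcontinuity (z t) hzmem t
    rw [(htime.mul_const c).deriv] at h1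
    rw [h1, hGdiv]
  -- derivative along the trajectory
  have hder : HasDerivAt (fun s => p (z s) s) (Dp (v, 1)) t := by
    have hcurve : HasDerivAt (fun s : ℝ => (z s, s)) (v, (1:ℝ)) t :=
      HasDerivAt.prodMk (hz t ht) (hasDerivAt_id t)
    exact hpd.hasFDerivAt.comp_hasDerivAt (f := fun s => (z s, s)) t hcurve
  have hlog : HasDerivAt (fun s => Real.log (p (z s) s)) (Dp (v, 1) / a) t :=
    hder.log (ne_of_gt hapos)
  -- decompose Dp (v, 1)
  have hDpv : Dp (v, (1:ℝ)) = s1 + Dp ((0:EuclideanSpace ℝ (Fin n)), (1:ℝ)) := by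
    have hsplit : (v, (1:ℝ)) = ((v, (0:ℝ)) : EuclideanSpace ℝ (Fin n) × ℝ)
        + ((0:EuclideanSpace ℝ (Fin n)), (1:ℝ)) := by simp
    rw [hsplit, map_add]
    congr 1
    have : Dp (v, (0:ℝ)) = (Dp.comp L) v := by simp [hL]
    rw [this, clm_decomp (Dp.comp L) v, hs1]
    refine Finset.sum_congr rfl fun i _ => ?_
    rw [ContinuousLinearMap.comp_apply, hLe, mul_comm]
  -- final algebra
  have hfinal : Dp (v, 1) / a = - (1 / c) * (s2 + c * s3) := by
    rw [hDpv]
    have hc' : c ≠ 0 := ne_of_gt hcpos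
    have ha' : a ≠ 0 := ne_of_gt hapos
    field_simp
    nlinarith [hkey]
  rw [hWdiv, ← hfinal]
  exact hlog
end

section
/- Let n ≥ 1, let f : ℝⁿ × ℝ → ℝⁿ be continuously differentiable, and let p : ℝⁿ × ℝ → ℝ be continuously differentiable and strictly positive satisfying ∂p/∂t = − div_z(p f). Let z : [0,1] → ℝⁿ be continuously differentiable with z'(t) = f(z(t), t). Then log p(z(1), 1) − log p(z(0), 0) = − ∫₀¹ (div_z f)(z(t), t) dt. (Total change in log-density along the flow; Equation (6) of the paper in the Euclidean case.) -/
open Set intervalIntegral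

/-!
Along a trajectory, `d/dt p(z(t), t) = ∇p · f + ∂ₜp`, and the continuity equation together with
the product rule `div (p f) = ∇p · f + p div f` turns this into `-p div f`. Hence
`d/dt log p(z(t), t) = -div f (z(t), t)`, and the fundamental theorem of calculus concludes.
-/

variable {n : ℕ}

theorem EuclideanSpace.continuousLinearMap_apply_eq_sum {F : Type*} [NormedAddCommGroup F]
    [NormedSpace ℝ F] (A : EuclideanSpace ℝ (Fin n) →L[ℝ] F) (v : EuclideanSpace ℝ (Fin n)) :
    A v = ∑ i, v i • A (EuclideanSpace.single i 1) := by
  conv_lhs => rw [← (EuclideanSpace.basisFun (Fin n) ℝ).sum_repr v]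
  simp [map_sum, map_smul]

theorem eucDiv_smul {φ : EuclideanSpace ℝ (Fin n) → ℝ}
    {g : EuclideanSpace ℝ (Fin n) → EuclideanSpace ℝ (Fin n)} {x : EuclideanSpace ℝ (Fin n)}
    (hφ : DifferentiableAt ℝ φ x) (hg : DifferentiableAt ℝ g x) :
    eucDiv (fun y => φ y • g y) x = fderiv ℝ φ x (g x) + φ x * eucDiv g x := by
  rw [EuclideanSpace.continuousLinearMap_apply_eq_sum (fderiv ℝ φ x), eucDiv, eucDiv,
    fderiv_fun_smul hφ hg, Finset.mul_sum, ← Finset.sum_add_distrib]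
  refine Finset.sum_congr rfl fun i _ => ?_
  simp only [add_apply, smul_apply,
    ContinuousLinearMap.smulRight_apply, PiLp.add_apply, PiLp.smul_apply, smul_eq_mul]
  ring

section Partial

variable {E F : Type*} [NormedAddCommGroup E] [NormedSpace ℝ E] [NormedAddCommGroup F]
  [NormedSpace ℝ F]

theorem fderiv_comp_prodMk_left {f : E × ℝ → F} {x : E} {t : ℝ}
    (hf : DifferentiableAt ℝ f (x, t)) :
    fderiv ℝ (fun y => f (y, t)) x = (fderiv ℝ f (x, t)).comp (ContinuousLinearMap.inl ℝ E ℝ) :=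
  (hf.hasFDerivAt.comp x (hasFDerivAt_prodMk_left x t)).fderiv

theorem DifferentiableAt.hasDerivAt_comp_prodMk_id {p : E × ℝ → F} {z : ℝ → E} {v : E} {t : ℝ}
    (hp : DifferentiableAt ℝ p (z t, t)) (hz : HasDerivAt z v t) :
    HasDerivAt (fun s => p (z s, s))
      (fderiv ℝ (fun y => p (y, t)) (z t) v + deriv (fun s => p (z t, s)) t) t := by
  have htime : HasDerivAt (fun s => p (z t, s)) (fderiv ℝ p (z t, t) (0, 1)) t :=
    hp.hasFDerivAt.comp_hasDerivAt t ((hasDerivAt_const t (z t)).prodMk (hasDerivAt_id t))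
  have hsplit : ((v, 1) : E × ℝ) = (v, 0) + (0, 1) := by simp
  rw [htime.deriv, fderiv_comp_prodMk_left hp, ContinuousLinearMap.comp_apply,
    ContinuousLinearMap.inl_apply, ← map_add, ← hsplit]
  exact hp.hasFDerivAt.comp_hasDerivAt (f := fun s => (z s, s)) t (hz.prodMk (hasDerivAt_id t))

end Partial

theorem continuous_eucDiv_comp_prodMk
    {f : EuclideanSpace ℝ (Fin n) × ℝ → EuclideanSpace ℝ (Fin n)} (hf : ContDiff ℝ 1 f) :
    Continuous fun q : EuclideanSpace ℝ (Fin n) × ℝ => eucDiv (fun y => f (y, q.2)) q.1 := by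
  have hdiv : ∀ q : EuclideanSpace ℝ (Fin n) × ℝ, eucDiv (fun y => f (y, q.2)) q.1
      = ∑ i, fderiv ℝ f q (EuclideanSpace.single i 1, 0) i := fun q => by
    simp only [eucDiv, fderiv_comp_prodMk_left (hf.differentiable one_ne_zero q)]
    rfl
  simp only [hdiv]
  have hf' := hf.continuous_fderiv one_ne_zero
  fun_prop

theorem hasDerivAt_log_density {f : EuclideanSpace ℝ (Fin n) × ℝ → EuclideanSpace ℝ (Fin n)}
    {p : EuclideanSpace ℝ (Fin n) × ℝ → ℝ} {z : ℝ → EuclideanSpace ℝ (Fin n)} {t : ℝ}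
    (hf : DifferentiableAt ℝ f (z t, t)) (hp : DifferentiableAt ℝ p (z t, t))
    (hpos : 0 < p (z t, t))
    (hliouville : deriv (fun s => p (z t, s)) t
      = - eucDiv (fun y => p (y, t) • f (y, t)) (z t))
    (hz : HasDerivAt z (f (z t, t)) t) :
    HasDerivAt (fun s => Real.log (p (z s, s))) (- eucDiv (fun y => f (y, t)) (z t)) t := by
  have hval : fderiv ℝ (fun y => p (y, t)) (z t) (f (z t, t)) + deriv (fun s => p (z t, s)) t
      = -eucDiv (fun y => f (y, t)) (z t) * p (z t, t) := by
    rw [hliouville, eucDiv_smul (by fun_prop) (by fun_prop)]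
    ring
  have hlog := (hp.hasDerivAt_comp_prodMk_id hz).log hpos.ne'
  rwa [hval, mul_div_cancel_right₀ _ hpos.ne'] at hlog

theorem stmt_7_general (n : ℕ)
    (f : EuclideanSpace ℝ (Fin n) × ℝ → EuclideanSpace ℝ (Fin n))
    (hf : ContDiff ℝ 1 f)
    (p : EuclideanSpace ℝ (Fin n) × ℝ → ℝ)
    (hp : ContDiff ℝ 1 p)
    (hppos : ∀ z t, 0 < p (z, t))
    (hliouville : ∀ (z : EuclideanSpace ℝ (Fin n)) (t : ℝ),
      deriv (fun s => p (z, s)) t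
        = - eucDiv (fun y => p (y, t) • f (y, t)) z)
    (z : ℝ → EuclideanSpace ℝ (Fin n))
    (hz : ∀ t ∈ Icc (0 : ℝ) 1, HasDerivAt z (f (z t, t)) t) :
    Real.log (p (z 1, 1)) - Real.log (p (z 0, 0))
      = - ∫ t in (0 : ℝ)..1, eucDiv (fun y => f (y, t)) (z t) := by
  have hderiv : ∀ t ∈ Icc (0 : ℝ) 1, HasDerivAt (fun s => Real.log (p (z s, s)))
      (- eucDiv (fun y => f (y, t)) (z t)) t := fun t ht =>
    hasDerivAt_log_density (hf.differentiable one_ne_zero _) (hp.differentiable one_ne_zero _)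
      (hppos _ _) (hliouville _ _) (hz t ht)
  have hz_cont : ContinuousOn z (Icc 0 1) := fun t ht => (hz t ht).continuousAt.continuousWithinAt
  have hdiv_cont : ContinuousOn (fun t => eucDiv (fun y => f (y, t)) (z t)) (Icc 0 1) :=
    (continuous_eucDiv_comp_prodMk hf).comp_continuousOn (hz_cont.prodMk continuousOn_id)
  rw [← intervalIntegral.integral_neg, integral_eq_sub_of_hasDerivAt
    (fun t ht => hderiv t (by rwa [uIcc_of_le zero_le_one] at ht))
    (hdiv_cont.neg.intervalIntegrable_of_Icc zero_le_one)]

/-- Equation (6) of the paper in the Euclidean case: the total change in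
log-density along a trajectory of `f` equals minus the time-integral of the
divergence of `f` along the trajectory. -/
theorem stmt_7 (n : ℕ) (hn : 1 ≤ n)
    (f : EuclideanSpace ℝ (Fin n) × ℝ → EuclideanSpace ℝ (Fin n))
    (hf : ContDiff ℝ 1 f)
    (p : EuclideanSpace ℝ (Fin n) × ℝ → ℝ)
    (hp : ContDiff ℝ 1 p)
    (hppos : ∀ z t, 0 < p (z, t))
    (hliouville : ∀ (z : EuclideanSpace ℝ (Fin n)) (t : ℝ),
      deriv (fun s => p (z, s)) t
        = - eucDiv (fun y => p (y, t) • f (y, t)) z)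
    (z : ℝ → EuclideanSpace ℝ (Fin n))
    (hz : ∀ t ∈ Icc (0 : ℝ) 1, HasDerivAt z (f (z t, t)) t) :
    Real.log (p (z 1, 1)) - Real.log (p (z 0, 0))
      = - ∫ t in (0 : ℝ)..1, eucDiv (fun y => f (y, t)) (z t) :=
  stmt_7_general n f hf p hp hppos hliouville z hz
end
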